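/- Fix s>1, a bounded open set U ⊆ ℝ^d, 1≤p<∞ and h>0. Then D^{(s)}_{L^p,2^s h}(U) ⊆ D^{(s)}_{L^∞,h}(U) and the inclusion is continuous: there is a constant C>0 such that sup_{β∈ℕ^d} h^{|β|}‖D^βφ‖_{L^∞(U)}/β!^s ≤ C (Σ_{γ∈ℕ^d} (2^s h)^{|γ|p}‖D^γφ‖_{L^p(U)}^p/γ!^{ps})^{1/p} for all φ ∈ D^{(s)}_{L^p,2^s h}(U). Consequently the spaces D^{(s)}_{L^p}(U), 1≤p<∞, and Ḃ^{(s)}(U) are all isomorphic to each other as locally convex spaces. -/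

import Mathlib

open MeasureTheory Filter Set
open scoped BigOperators ENNReal NNReal Topology

noncomputable section

/-- The order `|α|` of a multi-index `α`. -/
def mOrder {d : ℕ} (α : Fin d → ℕ) : ℕ := ∑ i, α i

/-- The factorial `α!` of a multi-index `α`. -/
def mFact {d : ℕ} (α : Fin d → ℕ) : ℕ := ∏ i, Nat.factorial (α i)

variable {d : ℕ} {F : Type*} [NormedAddCommGroup F] [NormedSpace ℝ F]

/-- First-order partial derivative `∂_i`. -/
def pd (i : Fin d) (f : (Fin d → ℝ) → F) : (Fin d → ℝ) → F :=
  fun x => fderiv ℝ f x (Pi.single i 1)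

/-- Iterated partial derivative `∂_i^n`. -/
def pdPow (i : Fin d) : ℕ → ((Fin d → ℝ) → F) → ((Fin d → ℝ) → F)
  | 0 => id
  | n + 1 => fun f => pd i (pdPow i n f)

/-- Iterated partial derivative `∂^α` for a multi-index `α`. -/
def pdm (α : Fin d → ℕ) (f : (Fin d → ℝ) → F) : (Fin d → ℝ) → F :=
  (List.finRange d).foldr (fun i g => pdPow i (α i) g) f

/-- The operator `D^α = i^{-|α|} ∂^α` for complex-valued functions. -/
def Dm (α : Fin d → ℕ) (f : (Fin d → ℝ) → ℂ) : (Fin d → ℝ) → ℂ :=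
  fun x => (-Complex.I) ^ (mOrder α) * pdm α f x

/-- `φ` is a Beurling–Gevrey test function of class `(s)` on `U`. -/
def IsGevreyTest (s : ℝ) (U : Set (Fin d → ℝ)) (φ : (Fin d → ℝ) → F) : Prop :=
  ContDiff ℝ (⊤ : ℕ∞) φ ∧ HasCompactSupport φ ∧ tsupport φ ⊆ U ∧
    ∀ h : ℝ, 0 < h → ∃ C : ℝ, ∀ (α : Fin d → ℕ) (x : Fin d → ℝ),
      ‖pdm α φ x‖ ≤ C * h ^ (mOrder α) * (mFact α : ℝ) ^ s

/-- The `ℓ^p`-type norm of a family of extended reals (sup for `p = ∞`). -/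
def seqLpNorm {ι : Type*} (p : ℝ≥0∞) (w : ι → ℝ≥0∞) : ℝ≥0∞ :=
  if p = ∞ then ⨆ i, w i else (∑' i, (w i) ^ p.toReal) ^ (1 / p.toReal)

/-- The norm of the space `D^s_{L^p,h}(U)`:
`(∑_α h^{p|α|} ‖D^α φ‖_{L^p(U)}^p / α!^{ps})^{1/p}` (sup over `α` when `p = ∞`). -/
def gNorm (s h : ℝ) (p : ℝ≥0∞) (U : Set (Fin d → ℝ)) (φ : (Fin d → ℝ) → F) : ℝ≥0∞ :=
  seqLpNorm p (fun α : Fin d → ℕ =>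
    ENNReal.ofReal (h ^ (mOrder α) / (mFact α : ℝ) ^ s) *
      eLpNorm (pdm α φ) p (volume.restrict U))

/-- Membership in `D^{(s)}_{L^p,h}(U)`, the closure of `D^{(s)}(U)` in `D^s_{L^p,h}(U)`. -/
def MemD (s h : ℝ) (p : ℝ≥0∞) (U : Set (Fin d → ℝ)) (φ : (Fin d → ℝ) → F) : Prop :=
  ContDiffOn ℝ (⊤ : ℕ∞) φ U ∧ gNorm s h p U φ < ⊤ ∧
    ∀ ε : ℝ, 0 < ε → ∃ ψ : (Fin d → ℝ) → F, IsGevreyTest s U ψ ∧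
      gNorm s h p U (φ - ψ) < ENNReal.ofReal ε

/-- Membership in `Ḃ^{(s)}(U)`, the closure of `D^{(s)}(U)` with respect to the
family of norms `p_h`, `h > 0` (the norms being directed, closure with respect to the
whole family amounts to approximability in each norm separately). -/
def MemBdot (s : ℝ) (U : Set (Fin d → ℝ)) (φ : (Fin d → ℝ) → F) : Prop :=
  ContDiffOn ℝ (⊤ : ℕ∞) φ U ∧ (∀ h : ℝ, 0 < h → gNorm s h ∞ U φ < ⊤) ∧
    ∀ h ε : ℝ, 0 < h → 0 < ε → ∃ ψ : (Fin d → ℝ) → F, IsGevreyTest s U ψ ∧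
      gNorm s h ∞ U (φ - ψ) < ENNReal.ofReal ε

/-- A continuous linear functional on the Banach space `D^{(s)}_{L^q,h}(U)`. -/
def IsDualD (s h : ℝ) (q : ℝ≥0∞) (U : Set (Fin d → ℝ)) (T : ((Fin d → ℝ) → ℂ) → ℂ) : Prop :=
  (∀ φ ψ, MemD s h q U φ → MemD s h q U ψ → T (φ + ψ) = T φ + T ψ) ∧
  (∀ (c : ℂ) (φ), MemD s h q U φ → T (c • φ) = c * T φ) ∧
  ∃ M : ℝ, ∀ φ, MemD s h q U φ → ‖T φ‖ ≤ M * (gNorm s h q U φ).toReal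

/-- A continuous linear map from `Ḃ^{(s)}(U)` into a Banach space `E` (over `ℂ`). -/
def IsContLinBdot (s : ℝ) (U : Set (Fin d → ℝ)) {E : Type*} [NormedAddCommGroup E]
    [NormedSpace ℂ E] (f : ((Fin d → ℝ) → ℂ) → E) : Prop :=
  (∀ φ ψ, MemBdot s U φ → MemBdot s U ψ → f (φ + ψ) = f φ + f ψ) ∧
  (∀ (c : ℂ) (φ), MemBdot s U φ → f (c • φ) = c • f φ) ∧
  ∃ h M : ℝ, 0 < h ∧ ∀ φ, MemBdot s U φ → ‖f φ‖ ≤ M * (gNorm s h ∞ U φ).toReal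


/-! For a smooth function `ψ` with compact support in `U`, integrating `∂_1 ⋯ ∂_d ψ` successively
along coordinate lines gives `|ψ(x)| ≤ ‖∂_1 ⋯ ∂_d ψ‖_{L¹(U)} ≤ |U|^{1-1/p} ‖∂_1 ⋯ ∂_d ψ‖_{L^p(U)}`.
Applied to `∂^β ψ`, and combined with `(β + 1)! ≤ 2^{|β|} β!`, this bounds the `β`-th term of the
`L^∞` norm with parameter `h` by `(2^s h)^{-d} |U|^{1-1/p}` times the `(β + 1)`-th term of the `L^p`
norm with parameter `2^s h`. The bound passes to the closure of the test functions because
convergence in the `L^p` norm gives almost everywhere convergence of a subsequence of every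
derivative. Conversely, Hölder's inequality bounds the `L^p` norm with parameter `h` by
`|U|^{1/p} (∑_α 2^{-p|α|})^{1/p}` times the `L^∞` norm with parameter `2h`.
-/

section PartialDerivatives

variable {U : Set (Fin d → ℝ)} {f g : (Fin d → ℝ) → F}

lemma contDiff_pd (hf : ContDiff ℝ (⊤ : ℕ∞) f) (i : Fin d) : ContDiff ℝ (⊤ : ℕ∞) (pd i f) :=
  (hf.fderiv_right (m := (⊤ : ℕ∞)) (by simp)).clm_apply contDiff_const

lemma contDiffOn_pd (hU : IsOpen U) (hf : ContDiffOn ℝ (⊤ : ℕ∞) f U) (i : Fin d) :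
    ContDiffOn ℝ (⊤ : ℕ∞) (pd i f) U :=
  (hf.fderiv_of_isOpen hU (m := (⊤ : ℕ∞)) (by simp)).clm_apply contDiffOn_const

lemma pd_congr_on (hU : IsOpen U) (h : EqOn f g U) (i : Fin d) : EqOn (pd i f) (pd i g) U :=
  fun x hx => by simp only [pd, (h.eventuallyEq_of_mem (hU.mem_nhds hx)).fderiv_eq]

lemma pd_sub_on (hU : IsOpen U) (hf : DifferentiableOn ℝ f U) (hg : DifferentiableOn ℝ g U)
    (i : Fin d) : EqOn (pd i (f - g)) (pd i f - pd i g) U := fun x hx => by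
  simp [pd, fderiv_sub ((hf x hx).differentiableAt (hU.mem_nhds hx))
    ((hg x hx).differentiableAt (hU.mem_nhds hx))]

lemma pd_pd_apply (hf : ContDiff ℝ (⊤ : ℕ∞) f) (i j : Fin d) (x : Fin d → ℝ) :
    pd i (pd j f) x = fderiv ℝ (fderiv ℝ f) x (Pi.single i 1) (Pi.single j 1) := by
  have hdf : Differentiable ℝ (fderiv ℝ f) :=
    (hf.fderiv_right (m := (⊤ : ℕ∞)) (by simp)).differentiable (by simp)
  change fderiv ℝ (fun y => fderiv ℝ f y (Pi.single j 1)) x (Pi.single i 1) = _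
  simp [fderiv_clm_apply (hdf x) (differentiableAt_const (Pi.single j (1 : ℝ)))]

lemma pd_comm (hf : ContDiff ℝ (⊤ : ℕ∞) f) (i j : Fin d) : pd i (pd j f) = pd j (pd i f) := by
  funext x
  have hsymm := hf.contDiffAt.isSymmSndFDerivAt (x := x)
    (by simp only [minSmoothness_of_isRCLikeNormedField]; exact WithTop.coe_le_coe.mpr le_top)
  rw [pd_pd_apply hf, pd_pd_apply hf, hsymm.eq]

lemma contDiff_pdPow (hf : ContDiff ℝ (⊤ : ℕ∞) f) (i : Fin d) (n : ℕ) :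
    ContDiff ℝ (⊤ : ℕ∞) (pdPow i n f) := by
  induction n with
  | zero => exact hf
  | succ n ih => exact contDiff_pd ih i

lemma contDiffOn_pdPow (hU : IsOpen U) (hf : ContDiffOn ℝ (⊤ : ℕ∞) f U) (i : Fin d) (n : ℕ) :
    ContDiffOn ℝ (⊤ : ℕ∞) (pdPow i n f) U := by
  induction n with
  | zero => exact hf
  | succ n ih => exact contDiffOn_pd hU ih i

lemma tsupport_pdPow_subset (f : (Fin d → ℝ) → F) (i : Fin d) (n : ℕ) :
    tsupport (pdPow i n f) ⊆ tsupport f := by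
  induction n with
  | zero => exact subset_rfl
  | succ n ih => exact (tsupport_fderiv_apply_subset ℝ _).trans ih

lemma pdPow_congr_on (hU : IsOpen U) (h : EqOn f g U) (i : Fin d) (n : ℕ) :
    EqOn (pdPow i n f) (pdPow i n g) U := by
  induction n with
  | zero => exact h
  | succ n ih => exact pd_congr_on hU ih i

lemma pdPow_sub_on (hU : IsOpen U) (hf : ContDiffOn ℝ (⊤ : ℕ∞) f U)
    (hg : ContDiffOn ℝ (⊤ : ℕ∞) g U) (i : Fin d) (n : ℕ) :
    EqOn (pdPow i n (f - g)) (pdPow i n f - pdPow i n g) U := by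
  induction n with
  | zero => exact fun _ _ => rfl
  | succ n ih =>
    refine (pd_congr_on hU ih i).trans (pd_sub_on hU ?_ ?_ i)
    · exact (contDiffOn_pdPow hU hf i n).differentiableOn (by simp)
    · exact (contDiffOn_pdPow hU hg i n).differentiableOn (by simp)

lemma pdPow_add (f : (Fin d → ℝ) → F) (i : Fin d) (m n : ℕ) :
    pdPow i (m + n) f = pdPow i m (pdPow i n f) := by
  induction m with
  | zero => simp [pdPow]
  | succ m ih => rw [Nat.add_right_comm]; exact congrArg (pd i) ih

lemma pd_pdPow_comm (hf : ContDiff ℝ (⊤ : ℕ∞) f) (i j : Fin d) (n : ℕ) :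
    pd i (pdPow j n f) = pdPow j n (pd i f) := by
  induction n with
  | zero => rfl
  | succ n ih => exact (pd_comm (contDiff_pdPow hf j n) i j).trans (congrArg (pd j) ih)

end PartialDerivatives

section MultiIndexDerivatives

variable {U : Set (Fin d → ℝ)} {f g : (Fin d → ℝ) → F}

def pdmList (α : Fin d → ℕ) (l : List (Fin d)) (f : (Fin d → ℝ) → F) : (Fin d → ℝ) → F :=
  l.foldr (fun i g => pdPow i (α i) g) f

lemma contDiff_pdmList (hf : ContDiff ℝ (⊤ : ℕ∞) f) (α : Fin d → ℕ) (l : List (Fin d)) :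
    ContDiff ℝ (⊤ : ℕ∞) (pdmList α l f) := by
  induction l with
  | nil => exact hf
  | cons i t ih => exact contDiff_pdPow ih i (α i)

lemma contDiffOn_pdmList (hU : IsOpen U) (hf : ContDiffOn ℝ (⊤ : ℕ∞) f U) (α : Fin d → ℕ)
    (l : List (Fin d)) : ContDiffOn ℝ (⊤ : ℕ∞) (pdmList α l f) U := by
  induction l with
  | nil => exact hf
  | cons i t ih => exact contDiffOn_pdPow hU ih i (α i)

lemma tsupport_pdmList_subset (f : (Fin d → ℝ) → F) (α : Fin d → ℕ) (l : List (Fin d)) :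
    tsupport (pdmList α l f) ⊆ tsupport f := by
  induction l with
  | nil => exact subset_rfl
  | cons i t ih => exact (tsupport_pdPow_subset _ i (α i)).trans ih

lemma HasCompactSupport.pdmList (hf : HasCompactSupport f) (α : Fin d → ℕ) (l : List (Fin d)) :
    HasCompactSupport (pdmList α l f) :=
  hf.mono' ((subset_tsupport _).trans (tsupport_pdmList_subset f α l))

lemma pdmList_sub_on (hU : IsOpen U) (hf : ContDiffOn ℝ (⊤ : ℕ∞) f U)
    (hg : ContDiffOn ℝ (⊤ : ℕ∞) g U) (α : Fin d → ℕ) (l : List (Fin d)) :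
    EqOn (pdmList α l (f - g)) (pdmList α l f - pdmList α l g) U := by
  induction l with
  | nil => exact fun _ _ => rfl
  | cons i t ih =>
    intro x hx
    have hcongr := pdPow_congr_on hU ih i (α i) hx
    exact hcongr.trans (pdPow_sub_on hU (contDiffOn_pdmList hU hf α t)
      (contDiffOn_pdmList hU hg α t) i (α i) hx)

lemma pd_pdmList_comm (hf : ContDiff ℝ (⊤ : ℕ∞) f) (α : Fin d → ℕ) (i : Fin d)
    (l : List (Fin d)) : pd i (pdmList α l f) = pdmList α l (pd i f) := by
  induction l with
  | nil => rfl
  | cons j t ih =>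
    exact (pd_pdPow_comm (contDiff_pdmList hf α t) i j (α j)).trans (congrArg _ ih)

lemma pdPow_pdmList_comm (hf : ContDiff ℝ (⊤ : ℕ∞) f) (α : Fin d → ℕ) (i : Fin d) (n : ℕ)
    (l : List (Fin d)) : pdPow i n (pdmList α l f) = pdmList α l (pdPow i n f) := by
  induction n with
  | zero => rfl
  | succ n ih =>
    exact (congrArg (pd i) ih).trans (pd_pdmList_comm (contDiff_pdPow hf i n) α i l)

lemma pdmList_add (hf : ContDiff ℝ (⊤ : ℕ∞) f) (α α' : Fin d → ℕ) (l : List (Fin d)) :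
    pdmList (α + α') l f = pdmList α l (pdmList α' l f) := by
  induction l with
  | nil => rfl
  | cons i t ih =>
    change pdPow i (α i + α' i) (pdmList (α + α') t f)
      = pdPow i (α i) (pdmList α t (pdPow i (α' i) (pdmList α' t f)))
    rw [ih, pdPow_add, pdPow_pdmList_comm (contDiff_pdmList hf α' t)]

lemma contDiff_pdm (hf : ContDiff ℝ (⊤ : ℕ∞) f) (α : Fin d → ℕ) :
    ContDiff ℝ (⊤ : ℕ∞) (pdm α f) :=
  contDiff_pdmList hf α _

lemma contDiffOn_pdm (hU : IsOpen U) (hf : ContDiffOn ℝ (⊤ : ℕ∞) f U) (α : Fin d → ℕ) :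
    ContDiffOn ℝ (⊤ : ℕ∞) (pdm α f) U :=
  contDiffOn_pdmList hU hf α _

lemma tsupport_pdm_subset (f : (Fin d → ℝ) → F) (α : Fin d → ℕ) :
    tsupport (pdm α f) ⊆ tsupport f :=
  tsupport_pdmList_subset f α _

lemma HasCompactSupport.pdm (hf : HasCompactSupport f) (α : Fin d → ℕ) :
    HasCompactSupport (pdm α f) :=
  hf.pdmList α _

lemma pdm_sub_on (hU : IsOpen U) (hf : ContDiffOn ℝ (⊤ : ℕ∞) f U)
    (hg : ContDiffOn ℝ (⊤ : ℕ∞) g U) (α : Fin d → ℕ) :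
    EqOn (pdm α (f - g)) (pdm α f - pdm α g) U :=
  pdmList_sub_on hU hf hg α _

lemma pdm_add (hf : ContDiff ℝ (⊤ : ℕ∞) f) (α α' : Fin d → ℕ) :
    pdm (α + α') f = pdm α (pdm α' f) :=
  pdmList_add hf α α' _

lemma aestronglyMeasurable_pdm (hU : IsOpen U) (hf : ContDiffOn ℝ (⊤ : ℕ∞) f U)
    (α : Fin d → ℕ) : AEStronglyMeasurable (pdm α f) (volume.restrict U) :=
  (contDiffOn_pdm hU hf α).continuousOn.aestronglyMeasurable hU.measurableSet

end MultiIndexDerivatives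

section SupBound

variable {f : (Fin d → ℝ) → F}

lemma enorm_le_lintegral_enorm_pd (hf : ContDiff ℝ 1 f) (hcs : HasCompactSupport f)
    (i : Fin d) (x : Fin d → ℝ) :
    ‖f x‖ₑ ≤ ∫⁻ t, ‖pd i f (Function.update x i t)‖ₑ :=
  calc ‖f x‖ₑ = ‖(f ∘ Function.update x i) (x i)‖ₑ := by simp
    _ ≤ ∫⁻ t in Iic (x i), ‖deriv (f ∘ Function.update x i) t‖ₑ :=
      HasCompactSupport.enorm_le_lintegral_Ici_deriv (hf.comp (contDiff_update 1 x i))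
        (hcs.comp_isClosedEmbedding (isClosedEmbedding_update x i)) _
    _ ≤ ∫⁻ t, ‖deriv (f ∘ Function.update x i) t‖ₑ := setLIntegral_le_lintegral _ _
    _ = ∫⁻ t, ‖pd i f (Function.update x i t)‖ₑ := by
      congr 1 with t
      rw [fderiv_comp_deriv _ (hf.differentiable one_ne_zero _)
        (hasDerivAt_update x i t).differentiableAt, deriv_update]
      rfl

lemma enorm_le_lmarginal_enorm_pdmList (hf : ContDiff ℝ (⊤ : ℕ∞) f) (hcs : HasCompactSupport f)
    (l : List (Fin d)) (hl : l.Nodup) (x : Fin d → ℝ) :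
    ‖f x‖ₑ ≤ (∫⋯∫⁻_l.toFinset, fun y => ‖pdmList 1 l f y‖ₑ ∂fun _ => volume) x := by
  induction l generalizing x with
  | nil => simp [pdmList]
  | cons i t ih =>
    obtain ⟨hit, ht⟩ := List.nodup_cons.mp hl
    have hmeas : Measurable fun y => ‖pdmList 1 (i :: t) f y‖ₑ :=
      (contDiff_pdmList hf 1 _).continuous.enorm.measurable
    rw [List.toFinset_cons, lmarginal_insert' _ hmeas (by simpa using hit)]
    refine (ih ht x).trans (lmarginal_mono (fun y => ?_) x)
    exact enorm_le_lintegral_enorm_pd ((contDiff_pdmList hf 1 t).of_le (by simp))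
      (hcs.pdmList 1 t) i y

lemma enorm_le_lintegral_enorm_pdm_one (hf : ContDiff ℝ (⊤ : ℕ∞) f) (hcs : HasCompactSupport f)
    (x : Fin d → ℝ) : ‖f x‖ₑ ≤ ∫⁻ y, ‖pdm 1 f y‖ₑ := by
  have := enorm_le_lmarginal_enorm_pdmList hf hcs _ (List.nodup_finRange d) x
  rwa [List.toFinset_finRange, lmarginal_univ, ← volume_pi] at this

end SupBound

section Weights

/-- `gNorm s h p U φ` is by definition
`seqLpNorm p fun α => gWeight s h α * eLpNorm (pdm α φ) p (volume.restrict U)`. -/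
def gWeight (s h : ℝ) (α : Fin d → ℕ) : ℝ≥0∞ :=
  ENNReal.ofReal (h ^ mOrder α / (mFact α : ℝ) ^ s)

lemma mFact_pos (α : Fin d → ℕ) : 0 < mFact α :=
  Finset.prod_pos fun _ _ => Nat.factorial_pos _

lemma gWeight_ne_zero {s h : ℝ} (hh : 0 < h) (α : Fin d → ℕ) : gWeight s h α ≠ 0 := by
  have := mFact_pos α
  exact (ENNReal.ofReal_pos.mpr (by positivity)).ne'

lemma mOrder_add_one (β : Fin d → ℕ) : mOrder (β + 1) = mOrder β + d := by
  simp [mOrder, Finset.sum_add_distrib]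

lemma mFact_add_one (β : Fin d → ℕ) : mFact (β + 1) = mFact β * ∏ i, (β i + 1) := by
  simp only [mFact, Pi.add_apply, Pi.one_apply, ← Finset.prod_mul_distrib, Nat.factorial_succ,
    mul_comm]

lemma prod_add_one_le_two_pow_mOrder (β : Fin d → ℕ) : ∏ i, (β i + 1) ≤ 2 ^ mOrder β := by
  rw [mOrder, ← Finset.prod_pow_eq_pow_sum]
  exact Finset.prod_le_prod' fun i _ => Nat.lt_two_pow_self

/-- The factor `2^s` comes from `(β + 1)! ≤ 2^{|β|} β!`. -/
lemma gWeight_le_gWeight_add_one {s h : ℝ} (hs : 0 ≤ s) (hh : 0 < h) (β : Fin d → ℕ) :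
    gWeight s h β ≤
      ENNReal.ofReal (((2 : ℝ) ^ s * h)⁻¹ ^ d) * gWeight s ((2 : ℝ) ^ s * h) (β + 1) := by
  rw [gWeight, gWeight, ← ENNReal.ofReal_mul (by positivity), mOrder_add_one, mFact_add_one]
  refine ENNReal.ofReal_le_ofReal ?_
  have hA : (0 : ℝ) < mFact β := by exact_mod_cast mFact_pos β
  have hP : (0 : ℝ) < ((∏ i, (β i + 1) : ℕ) : ℝ) := by positivity
  have hPle : ((∏ i, (β i + 1) : ℕ) : ℝ) ^ s ≤ ((2 : ℝ) ^ s) ^ mOrder β := by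
    rw [← Real.rpow_natCast, ← Real.rpow_mul zero_le_two, mul_comm, Real.rpow_mul zero_le_two,
      Real.rpow_natCast]
    exact Real.rpow_le_rpow hP.le (by exact_mod_cast prod_add_one_le_two_pow_mOrder β) hs
  calc h ^ mOrder β / (mFact β : ℝ) ^ s
      ≤ h ^ mOrder β / (mFact β : ℝ) ^ s *
          (((2 : ℝ) ^ s) ^ mOrder β / ((∏ i, (β i + 1) : ℕ) : ℝ) ^ s) :=
        le_mul_of_one_le_right (by positivity) ((one_le_div (by positivity)).mpr hPle)
    _ = _ := by
        have h2 : (0 : ℝ) < 2 ^ s := by positivity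
        rw [Nat.cast_mul, Real.mul_rpow hA.le hP.le, mul_pow, pow_add, pow_add, inv_pow]
        field_simp
        ring

lemma gWeight_eq_two_inv_pow_mul (s h : ℝ) (α : Fin d → ℕ) :
    gWeight s h α = 2⁻¹ ^ mOrder α * gWeight s (2 * h) α := by
  rw [gWeight, gWeight, ← ENNReal.ofReal_ofNat 2, ← ENNReal.ofReal_inv_of_pos two_pos,
    ← ENNReal.ofReal_pow (by norm_num), ← ENNReal.ofReal_mul (by positivity), mul_pow,
    ← mul_div_assoc, ← mul_assoc, ← mul_pow, inv_mul_cancel₀ two_ne_zero, one_pow, one_mul]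

lemma tsum_pow_mOrder (a : ℝ≥0∞) : ∀ d : ℕ, ∑' α : Fin d → ℕ, a ^ mOrder α = (1 - a)⁻¹ ^ d
  | 0 => by simp [mOrder]
  | d + 1 => by
    have hcons (n : ℕ) (α : Fin d → ℕ) :
        mOrder (Fin.consEquiv (fun _ => ℕ) (n, α)) = n + mOrder α :=
      Fin.sum_cons n α
    rw [← (Fin.consEquiv fun _ => ℕ).tsum_eq, ENNReal.tsum_prod']
    simp only [hcons, pow_add, ENNReal.tsum_mul_left, ENNReal.tsum_mul_right,
      tsum_pow_mOrder a d, ENNReal.tsum_geometric, pow_succ']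

end Weights

section SeqLpNorm

variable {ι : Type*} {p : ℝ≥0∞}

lemma le_seqLpNorm (hp : p ≠ 0) (t : ι → ℝ≥0∞) (i : ι) : t i ≤ seqLpNorm p t := by
  rcases eq_or_ne p ∞ with rfl | hp'
  · exact le_iSup t i
  have hr : 0 < p.toReal := ENNReal.toReal_pos hp hp'
  rw [seqLpNorm, if_neg hp', ← ENNReal.rpow_le_rpow_iff hr, ← ENNReal.rpow_mul,
    one_div_mul_cancel hr.ne', ENNReal.rpow_one]
  exact ENNReal.le_tsum i

lemma seqLpNorm_mono {t u : ι → ℝ≥0∞} (h : ∀ i, t i ≤ u i) : seqLpNorm p t ≤ seqLpNorm p u := by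
  rcases eq_or_ne p ∞ with rfl | hp
  · exact iSup_mono h
  · simp only [seqLpNorm, if_neg hp]
    gcongr with i
    exact h i

/-- Minkowski's inequality for the counting measure. -/
lemma seqLpNorm_add_le [Countable ι] [MeasurableSpace ι] [MeasurableSingletonClass ι]
    (hp : 1 ≤ p) (t u : ι → ℝ≥0∞) :
    seqLpNorm p (t + u) ≤ seqLpNorm p t + seqLpNorm p u := by
  rcases eq_or_ne p ∞ with rfl | hp'
  · exact iSup_le fun i => add_le_add (le_iSup t i) (le_iSup u i)
  · have h := ENNReal.lintegral_Lp_add_le (μ := Measure.count) (f := t) (g := u)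
      (measurable_of_countable _).aemeasurable (measurable_of_countable _).aemeasurable
      (ENNReal.toReal_mono hp' hp)
    simpa only [seqLpNorm, if_neg hp', lintegral_count] using h

lemma seqLpNorm_le_mul (hp : p ≠ 0) (hp' : p ≠ ∞) {t c : ι → ℝ≥0∞} {M : ℝ≥0∞}
    (h : ∀ i, t i ≤ c i * M) : seqLpNorm p t ≤ seqLpNorm p c * M := by
  have hr : 0 < p.toReal := ENNReal.toReal_pos hp hp'
  refine (seqLpNorm_mono h).trans_eq ?_
  simp only [seqLpNorm, if_neg hp', ENNReal.mul_rpow_of_nonneg _ _ hr.le, ENNReal.tsum_mul_right]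
  rw [ENNReal.mul_rpow_of_nonneg _ _ (by positivity), ← ENNReal.rpow_mul,
    mul_one_div_cancel hr.ne', ENNReal.rpow_one]

end SeqLpNorm

section GevreyNorms

variable {s h : ℝ} {p : ℝ≥0∞} {U : Set (Fin d → ℝ)} {φ ψ : (Fin d → ℝ) → F}

lemma gWeight_mul_eLpNorm_le_gNorm (hp : p ≠ 0) (α : Fin d → ℕ) :
    gWeight s h α * eLpNorm (pdm α φ) p (volume.restrict U) ≤ gNorm s h p U φ :=
  le_seqLpNorm hp (fun α => gWeight s h α * eLpNorm (pdm α φ) p (volume.restrict U)) α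

lemma pdm_sub_ae (hU : IsOpen U) (hφ : ContDiffOn ℝ (⊤ : ℕ∞) φ U)
    (hψ : ContDiffOn ℝ (⊤ : ℕ∞) ψ U) (α : Fin d → ℕ) :
    pdm α (φ - ψ) =ᵐ[volume.restrict U] pdm α φ - pdm α ψ :=
  (pdm_sub_on hU hφ hψ α).eventuallyEq_of_mem (ae_restrict_mem hU.measurableSet)

lemma eLpNorm_pdm_le_inv_gWeight_mul_gNorm (hh : 0 < h) (hp : p ≠ 0) (α : Fin d → ℕ) :
    eLpNorm (pdm α φ) p (volume.restrict U) ≤ (gWeight s h α)⁻¹ * gNorm s h p U φ :=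
  (ENNReal.mul_le_iff_le_inv (gWeight_ne_zero hh α) ENNReal.ofReal_ne_top).mp
    (gWeight_mul_eLpNorm_le_gNorm hp α)

lemma gNorm_top_le {B : ℝ≥0∞}
    (hB : ∀ α, gWeight s h α * eLpNorm (pdm α φ) ∞ (volume.restrict U) ≤ B) :
    gNorm s h ∞ U φ ≤ B :=
  iSup_le hB

lemma gNorm_le_add_gNorm_sub (hp : 1 ≤ p) (hU : IsOpen U) (hφ : ContDiffOn ℝ (⊤ : ℕ∞) φ U)
    (hψ : ContDiffOn ℝ (⊤ : ℕ∞) ψ U) :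
    gNorm s h p U ψ ≤ gNorm s h p U φ + gNorm s h p U (φ - ψ) := by
  refine (seqLpNorm_mono fun α => ?_).trans (seqLpNorm_add_le hp _ _)
  have hae : pdm α ψ =ᵐ[volume.restrict U] pdm α φ - pdm α (φ - ψ) :=
    (pdm_sub_ae hU hφ hψ α).mono fun x hx => by simp [hx]
  rw [Pi.add_apply, ← mul_add, eLpNorm_congr_ae hae]
  gcongr
  exact eLpNorm_sub_le (aestronglyMeasurable_pdm hU hφ α)
    (aestronglyMeasurable_pdm hU (hφ.sub hψ) α) hp

end GevreyNorms

section TestFunctions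

variable {s h : ℝ} {p : ℝ≥0∞} {U : Set (Fin d → ℝ)} {φ ψ : (Fin d → ℝ) → F}

/-- Membership in `C_c^∞(U)`. -/
def IsTestFunction (U : Set (Fin d → ℝ)) (ψ : (Fin d → ℝ) → F) : Prop :=
  ContDiff ℝ (⊤ : ℕ∞) ψ ∧ HasCompactSupport ψ ∧ tsupport ψ ⊆ U

lemma IsGevreyTest.isTestFunction (hψ : IsGevreyTest s U ψ) : IsTestFunction U ψ :=
  ⟨hψ.1, hψ.2.1, hψ.2.2.1⟩

lemma isTestFunction_zero : IsTestFunction U (0 : (Fin d → ℝ) → F) :=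
  ⟨contDiff_const, HasCompactSupport.zero, by simp⟩

lemma IsTestFunction.sub (hφ : IsTestFunction U φ) (hψ : IsTestFunction U ψ) :
    IsTestFunction U (φ - ψ) := by
  refine ⟨hφ.1.sub hψ.1, hφ.2.1.sub hψ.2.1, ?_⟩
  rw [sub_eq_add_neg]
  exact (tsupport_add φ (-ψ)).trans (union_subset hφ.2.2 ((tsupport_neg ψ).trans_subset hψ.2.2))

lemma memD_iff_exists_tendsto :
    MemD s h p U φ ↔ ContDiffOn ℝ (⊤ : ℕ∞) φ U ∧ gNorm s h p U φ < ∞ ∧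
      ∃ Ψ : ℕ → (Fin d → ℝ) → F, (∀ m, IsGevreyTest s U (Ψ m)) ∧
        Tendsto (fun m => gNorm s h p U (φ - Ψ m)) atTop (𝓝 0) := by
  refine and_congr_right fun _ => and_congr_right fun _ => ⟨fun happrox => ?_, ?_⟩
  · choose Ψ hΨ hlt using fun m : ℕ => happrox (1 / (m + 1)) Nat.one_div_pos_of_nat
    have hε : Tendsto (fun m : ℕ => ENNReal.ofReal (1 / (m + 1))) atTop (𝓝 0) := by
      simpa using ENNReal.tendsto_ofReal tendsto_one_div_add_atTop_nhds_zero_nat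
    exact ⟨Ψ, hΨ, tendsto_of_tendsto_of_tendsto_of_le_of_le tendsto_const_nhds hε
      (fun _ => zero_le) fun m => (hlt m).le⟩
  · rintro ⟨Ψ, hΨ, hlim⟩ ε hε
    obtain ⟨m, hm⟩ := (hlim.eventually (gt_mem_nhds (ENNReal.ofReal_pos.mpr hε))).exists
    exact ⟨Ψ m, hΨ m, hm⟩

lemma MemD.of_gNorm_le {h₁ h₂ : ℝ} {p₁ p₂ : ℝ≥0∞} {C : ℝ≥0∞} (hC : C ≠ ∞)
    (hφ : MemD s h₁ p₁ U φ)
    (hle : ∀ ψ, IsTestFunction U ψ → gNorm s h₂ p₂ U (φ - ψ) ≤ C * gNorm s h₁ p₁ U (φ - ψ)) :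
    MemD s h₂ p₂ U φ := by
  obtain ⟨hφs, hfin, Ψ, hΨ, hlim⟩ := memD_iff_exists_tendsto.mp hφ
  have hlim' := ENNReal.Tendsto.const_mul hlim (Or.inr hC)
  rw [mul_zero] at hlim'
  refine memD_iff_exists_tendsto.mpr ⟨hφs, ?_, Ψ, hΨ, ?_⟩
  · simpa using (hle 0 isTestFunction_zero).trans_lt
      (ENNReal.mul_lt_top hC.lt_top (by simpa using hfin))
  · exact tendsto_of_tendsto_of_tendsto_of_le_of_le tendsto_const_nhds hlim'
      (fun _ => zero_le) fun m => hle _ (hΨ m).isTestFunction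

end TestFunctions

section Embedding

variable {s h : ℝ} {p : ℝ≥0∞} {U : Set (Fin d → ℝ)} {φ ψ : (Fin d → ℝ) → F}

/-- `|U|^{1 - 1/p}` comes from Hölder's inequality, `(2^s h)^{-d}` from the `d` derivatives
spent in the bound `|f(x)| ≤ ‖∂_1 ⋯ ∂_d f‖_{L^1}`. -/
def embeddingConst (s h : ℝ) (p : ℝ≥0∞) (U : Set (Fin d → ℝ)) : ℝ≥0∞ :=
  volume U ^ (1 - 1 / p.toReal) * ENNReal.ofReal (((2 : ℝ) ^ s * h)⁻¹ ^ d)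

lemma embeddingConst_ne_top (hUb : Bornology.IsBounded U) (hp : 1 ≤ p) (hp' : p ≠ ∞) :
    embeddingConst s h p U ≠ ∞ := by
  have hr : 1 ≤ p.toReal := ENNReal.toReal_one ▸ ENNReal.toReal_mono hp' hp
  have : 1 / p.toReal ≤ 1 := div_le_one_of_le₀ hr (by linarith)
  exact ENNReal.mul_ne_top (ENNReal.rpow_ne_top_of_nonneg (by linarith) hUb.measure_lt_top.ne)
    ENNReal.ofReal_ne_top

lemma gWeight_mul_enorm_pdm_le (hs : 0 ≤ s) (hh : 0 < h) (hp : 1 ≤ p) (hψ : IsTestFunction U ψ)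
    (β : Fin d → ℕ) (x : Fin d → ℝ) :
    gWeight s h β * ‖pdm β ψ x‖ₑ ≤ embeddingConst s h p U * gNorm s ((2 : ℝ) ^ s * h) p U ψ := by
  set H := (2 : ℝ) ^ s * h
  have hsup : ‖pdm β ψ x‖ₑ ≤ ∫⁻ y in U, ‖pdm (β + 1) ψ y‖ₑ := by
    rw [setLIntegral_eq_of_support_subset, add_comm, pdm_add hψ.1]
    · exact enorm_le_lintegral_enorm_pdm_one (contDiff_pdm hψ.1 β) (hψ.2.1.pdm β) x
    · exact fun y hy => hψ.2.2 (tsupport_pdm_subset ψ _ (subset_tsupport _ (by simpa using hy)))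
  have hHolder : ∫⁻ y in U, ‖pdm (β + 1) ψ y‖ₑ
      ≤ eLpNorm (pdm (β + 1) ψ) p (volume.restrict U) * volume U ^ (1 - 1 / p.toReal) := by
    simpa [eLpNorm_one_eq_lintegral_enorm] using eLpNorm_le_eLpNorm_mul_rpow_measure_univ hp
      ((contDiff_pdm hψ.1 _).continuous.aestronglyMeasurable (μ := volume.restrict U))
  calc gWeight s h β * ‖pdm β ψ x‖ₑ
      ≤ ENNReal.ofReal (H⁻¹ ^ d) * gWeight s H (β + 1) *
          (eLpNorm (pdm (β + 1) ψ) p (volume.restrict U) * volume U ^ (1 - 1 / p.toReal)) :=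
        mul_le_mul' (gWeight_le_gWeight_add_one hs hh β) (hsup.trans hHolder)
    _ = embeddingConst s h p U *
          (gWeight s H (β + 1) * eLpNorm (pdm (β + 1) ψ) p (volume.restrict U)) := by
        rw [embeddingConst]; ring
    _ ≤ embeddingConst s h p U * gNorm s H p U ψ := by
        gcongr
        exact gWeight_mul_eLpNorm_le_gNorm (zero_lt_one.trans_le hp).ne' _

/-- The bound for test functions passes to limits in `gNorm s (2^s h) p U`: these limits converge
in `L^p(U)` together with all their derivatives, hence along a subsequence almost everywhere. -/
lemma gNorm_top_le_of_tendsto (hs : 0 ≤ s) (hh : 0 < h) (hp : 1 ≤ p) (hp' : p ≠ ∞)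
    (hU : IsOpen U) (hUb : Bornology.IsBounded U) (hφ : ContDiffOn ℝ (⊤ : ℕ∞) φ U)
    {Ψ : ℕ → (Fin d → ℝ) → F} (hΨ : ∀ m, IsTestFunction U (Ψ m))
    (hlim : Tendsto (fun m => gNorm s ((2 : ℝ) ^ s * h) p U (φ - Ψ m)) atTop (𝓝 0)) :
    gNorm s h ∞ U φ ≤ embeddingConst s h p U * gNorm s ((2 : ℝ) ^ s * h) p U φ := by
  set H := (2 : ℝ) ^ s * h
  have hH : 0 < H := by positivity
  have hp0 : p ≠ 0 := (zero_lt_one.trans_le hp).ne'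
  refine gNorm_top_le fun β => ?_
  have hconv : Tendsto (fun m => eLpNorm (pdm β (Ψ m) - pdm β φ) p (volume.restrict U))
      atTop (𝓝 0) := by
    have hbound (m : ℕ) : eLpNorm (pdm β (Ψ m) - pdm β φ) p (volume.restrict U)
        ≤ (gWeight s H β)⁻¹ * gNorm s H p U (φ - Ψ m) := by
      rw [eLpNorm_sub_comm, ← eLpNorm_congr_ae (pdm_sub_ae hU hφ (hΨ m).1.contDiffOn β)]
      exact eLpNorm_pdm_le_inv_gWeight_mul_gNorm hH hp0 β
    have hlim' := ENNReal.Tendsto.const_mul hlim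
      (Or.inr (ENNReal.inv_ne_top.mpr (gWeight_ne_zero (s := s) hH β)))
    rw [mul_zero] at hlim'
    exact tendsto_of_tendsto_of_tendsto_of_le_of_le tendsto_const_nhds hlim'
      (fun _ => zero_le) hbound
  obtain ⟨ns, hns, hae⟩ := (tendstoInMeasure_of_tendsto_eLpNorm hp0
    (fun m => (contDiff_pdm (hΨ m).1 β).continuous.aestronglyMeasurable)
    (aestronglyMeasurable_pdm hU hφ β) hconv).exists_seq_tendsto_ae
  rw [eLpNorm_exponent_top, eLpNormEssSup, ← ENNReal.essSup_const_mul]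
  refine essSup_le_of_ae_le _ ?_
  filter_upwards [hae] with x hx
  have hlhs := ENNReal.Tendsto.const_mul (a := gWeight s h β) hx.enorm
    (Or.inr ENNReal.ofReal_ne_top)
  have hrhs := ENNReal.Tendsto.const_mul
    ((tendsto_const_nhds (x := gNorm s H p U φ)).add (hlim.comp hns.tendsto_atTop))
    (Or.inr (embeddingConst_ne_top (s := s) (h := h) hUb hp hp'))
  rw [add_zero] at hrhs
  refine le_of_tendsto_of_tendsto' hlhs hrhs fun k => ?_
  calc gWeight s h β * ‖pdm β (Ψ (ns k)) x‖ₑ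
      ≤ embeddingConst s h p U * gNorm s H p U (Ψ (ns k)) :=
        gWeight_mul_enorm_pdm_le hs hh hp (hΨ (ns k)) β x
    _ ≤ embeddingConst s h p U * (gNorm s H p U φ + gNorm s H p U (φ - Ψ (ns k))) := by
        gcongr
        exact gNorm_le_add_gNorm_sub hp hU hφ (hΨ (ns k)).1.contDiffOn

lemma gNorm_top_le_of_memD (hs : 0 ≤ s) (hh : 0 < h) (hp : 1 ≤ p) (hp' : p ≠ ∞)
    (hU : IsOpen U) (hUb : Bornology.IsBounded U) (hφ : MemD s ((2 : ℝ) ^ s * h) p U φ)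
    (hψ : IsTestFunction U ψ) :
    gNorm s h ∞ U (φ - ψ) ≤ embeddingConst s h p U * gNorm s ((2 : ℝ) ^ s * h) p U (φ - ψ) := by
  obtain ⟨hφs, -, Ψ, hΨ, hlim⟩ := memD_iff_exists_tendsto.mp hφ
  refine gNorm_top_le_of_tendsto hs hh hp hp' hU hUb (hφs.sub hψ.1.contDiffOn)
    (fun m => (hΨ m).isTestFunction.sub hψ) ?_
  simpa only [sub_sub_sub_cancel_right] using hlim

lemma MemD.top_of_two_rpow_mul (hs : 0 ≤ s) (hh : 0 < h) (hp : 1 ≤ p) (hp' : p ≠ ∞)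
    (hU : IsOpen U) (hUb : Bornology.IsBounded U) (hφ : MemD s ((2 : ℝ) ^ s * h) p U φ) :
    MemD s h ∞ U φ :=
  hφ.of_gNorm_le (embeddingConst_ne_top hUb hp hp') fun _ hψ =>
    gNorm_top_le_of_memD hs hh hp hp' hU hUb hφ hψ

end Embedding

section LinftyToLp

variable {s h : ℝ} {p : ℝ≥0∞} {U : Set (Fin d → ℝ)} {φ : (Fin d → ℝ) → F}

lemma seqLpNorm_two_inv_pow_mOrder_ne_top (hp : p ≠ 0) (hp' : p ≠ ∞) :
    seqLpNorm p (fun α : Fin d → ℕ => 2⁻¹ ^ mOrder α) ≠ ∞ := by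
  have hr : 0 < p.toReal := ENNReal.toReal_pos hp hp'
  have hlt : (2⁻¹ : ℝ≥0∞) ^ p.toReal < 1 := ENNReal.rpow_lt_one (by norm_num) hr
  rw [seqLpNorm, if_neg hp']
  simp_rw [← ENNReal.rpow_natCast, ← ENNReal.rpow_mul, mul_comm _ p.toReal, ENNReal.rpow_mul,
    ENNReal.rpow_natCast, tsum_pow_mOrder]
  exact ENNReal.rpow_ne_top_of_nonneg (by positivity)
    (ENNReal.pow_ne_top (ENNReal.inv_ne_top.mpr (tsub_pos_of_lt hlt).ne'))

lemma gNorm_le_gNorm_two_mul_top (hp : 1 ≤ p) (hp' : p ≠ ∞) (hU : IsOpen U)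
    (hφ : ContDiffOn ℝ (⊤ : ℕ∞) φ U) :
    gNorm s h p U φ ≤ seqLpNorm p (fun α : Fin d → ℕ => 2⁻¹ ^ mOrder α) *
      volume U ^ (1 / p.toReal) * gNorm s (2 * h) ∞ U φ := by
  rw [mul_assoc]
  refine seqLpNorm_le_mul (zero_lt_one.trans_le hp).ne' hp' fun α => ?_
  have hHolder : eLpNorm (pdm α φ) p (volume.restrict U)
      ≤ eLpNorm (pdm α φ) ∞ (volume.restrict U) * volume U ^ (1 / p.toReal) := by
    simpa using eLpNorm_le_eLpNorm_mul_rpow_measure_univ le_top (aestronglyMeasurable_pdm hU hφ α)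
  calc gWeight s h α * eLpNorm (pdm α φ) p (volume.restrict U)
      ≤ 2⁻¹ ^ mOrder α * gWeight s (2 * h) α *
          (eLpNorm (pdm α φ) ∞ (volume.restrict U) * volume U ^ (1 / p.toReal)) := by
        rw [← gWeight_eq_two_inv_pow_mul]
        gcongr
    _ = 2⁻¹ ^ mOrder α * (volume U ^ (1 / p.toReal) *
          (gWeight s (2 * h) α * eLpNorm (pdm α φ) ∞ (volume.restrict U))) := by ring
    _ ≤ _ := by
        gcongr
        exact gWeight_mul_eLpNorm_le_gNorm ENNReal.top_ne_zero α

lemma MemD.of_top_two_mul (hp : 1 ≤ p) (hp' : p ≠ ∞) (hU : IsOpen U)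
    (hUb : Bornology.IsBounded U) (hφ : MemD s (2 * h) ∞ U φ) : MemD s h p U φ :=
  hφ.of_gNorm_le (ENNReal.mul_ne_top
      (seqLpNorm_two_inv_pow_mOrder_ne_top (zero_lt_one.trans_le hp).ne' hp')
      (ENNReal.rpow_ne_top_of_nonneg (by positivity) hUb.measure_lt_top.ne))
    fun _ hψ => gNorm_le_gNorm_two_mul_top hp hp' hU (hφ.1.sub hψ.1.contDiffOn)

end LinftyToLp

/-- Fix `s > 1`, a bounded open set `U ⊆ ℝ^d`, `1 ≤ p < ∞` and `h > 0`.
Then `D^{(s)}_{L^p,2^s h}(U) ⊆ D^{(s)}_{L^∞,h}(U)` with a continuous inclusion: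
`sup_β h^{|β|}‖D^βφ‖_{L^∞}/β!^s ≤ C (∑_γ (2^s h)^{|γ|p}‖D^γφ‖_{L^p}^p/γ!^{ps})^{1/p}`.
Consequently the spaces `D^{(s)}_{L^p}(U)`, `1 ≤ p < ∞`, and `Ḃ^{(s)}(U)` are all
isomorphic to each other as locally convex spaces; in particular they coincide as sets. -/
theorem statement_11 {d : ℕ} (s : ℝ) (hs : 1 < s)
    (U : Set (Fin d → ℝ)) (hU : IsOpen U) (hUb : Bornology.IsBounded U)
    (p : ℝ≥0∞) (hp1 : 1 ≤ p) (hp2 : p ≠ ∞)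
    (h : ℝ) (hh : 0 < h) :
    (∀ φ : (Fin d → ℝ) → ℂ, MemD s ((2 : ℝ) ^ s * h) p U φ → MemD s h ∞ U φ) ∧
    (∃ C : ℝ, 0 < C ∧ ∀ φ : (Fin d → ℝ) → ℂ, MemD s ((2 : ℝ) ^ s * h) p U φ →
      gNorm s h ∞ U φ ≤ ENNReal.ofReal C * gNorm s ((2 : ℝ) ^ s * h) p U φ) ∧
    (∀ φ : (Fin d → ℝ) → ℂ,
      (∀ h' : ℝ, 0 < h' → MemD s h' p U φ) ↔ (∀ h' : ℝ, 0 < h' → MemD s h' ∞ U φ)) := by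
  have hs0 : 0 ≤ s := by linarith
  have hC := embeddingConst_ne_top (s := s) (h := h) hUb hp1 hp2
  refine ⟨fun φ hφ => hφ.top_of_two_rpow_mul hs0 hh hp1 hp2 hU hUb,
    ⟨(embeddingConst s h p U).toReal + 1, by positivity, fun φ hφ => ?_⟩,
    fun φ => ⟨fun hφ h' hh' => (hφ _ (by positivity)).top_of_two_rpow_mul hs0 hh' hp1 hp2 hU hUb,
      fun hφ h' hh' => (hφ _ (by positivity)).of_top_two_mul hp1 hp2 hU hUb⟩⟩
  calc gNorm s h ∞ U φ ≤ embeddingConst s h p U * gNorm s ((2 : ℝ) ^ s * h) p U φ := by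
        simpa using gNorm_top_le_of_memD hs0 hh hp1 hp2 hU hUb hφ isTestFunction_zero
    _ ≤ ENNReal.ofReal ((embeddingConst s h p U).toReal + 1) *
          gNorm s ((2 : ℝ) ^ s * h) p U φ := by
        gcongr
        exact (ENNReal.le_ofReal_iff_toReal_le hC (by positivity)).mpr (by linarith)
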